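/- Let $X$ be a Baire topological space with countable base $\{V_k\}$, $T$ a continuous map on a commutative $F$-algebra $X$, $N \geq 2$, and suppose $G \subseteq X^N$ is the set of tuples $f$ such that for every finite nonempty $A \subseteq \mathbb{N}_0^N \setminus \{0\}$, some fixed choice $\beta = \beta(A) \in A$, every basic open $V_k$ and every balanced basic neighborhood $W_\ell$ of $0$, there is $q$ with $T^q(f^\beta) \in V_k$ and $T^q(f^\alpha) \in W_\ell$ for $\alpha \in A\setminus\{\beta\}$. Then every $f \in G$ generates a hypercyclic algebra for $T$: for every nonzero polynomial $P = \sum_{\alpha\in A} c_\alpha t^\alpha$ with $P(0)=0$, the element $P(f)$ is hypercyclic for $T$. -/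

import Mathlib

/-!
Write `P(f) = c_β f^β + ∑_{α ≠ β} c_α f^α`. For a nonempty open `V ∋ x`, continuity of the vector
operations at `(x / c_β, 0, …, 0)` gives an open `V'` and a balanced open neighbourhood `W` of `0`
with `c_β V' + ∑_{α ≠ β} c_α W ⊆ V`. An iterate `T^q` sending `f^β` into `V'` and every other
`f^α` into `W` therefore sends `P(f)` into `V`, by linearity.
-/

open Filter Topology Set

section ApproximationInTVS

variable {𝕂 X ι : Type*} [NontriviallyNormedField 𝕂] [AddCommGroup X] [Module 𝕂 X]
  [TopologicalSpace X] [IsTopologicalAddGroup X] [ContinuousSMul 𝕂 X]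

omit [IsTopologicalAddGroup X] in
variable (𝕂) in
theorem exists_isOpen_balanced_subset_of_mem_nhds_zero {U : Set X} (hU : U ∈ 𝓝 (0 : X)) :
    ∃ W ⊆ U, IsOpen W ∧ (0 : X) ∈ W ∧ Balanced 𝕂 W := by
  have hcore : balancedCore 𝕂 U ∈ 𝓝 (0 : X) := balancedCore_mem_nhds_zero hU
  have h0 : (0 : X) ∈ interior (balancedCore 𝕂 U) := mem_interior_iff_mem_nhds.2 hcore
  exact ⟨_, interior_subset.trans (balancedCore_subset U), isOpen_interior, h0,
    (balancedCore_balanced U).interior h0⟩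

theorem exists_mem_nhds_zero_sum_smul_mem (s : Finset ι) (c : ι → 𝕂) {Z : Set X}
    (hZ : Z ∈ 𝓝 (0 : X)) :
    ∃ W ∈ 𝓝 (0 : X), ∀ w : ι → X, (∀ i ∈ s, w i ∈ W) → ∑ i ∈ s, c i • w i ∈ Z := by
  classical
  induction s using Finset.induction_on generalizing Z with
  | empty => exact ⟨univ, univ_mem, fun w _ => by simpa using mem_of_mem_nhds hZ⟩
  | insert j s hj ih =>
    obtain ⟨Z', hZ', hadd⟩ := exists_nhds_zero_half hZ
    obtain ⟨W, hW, hsum⟩ := ih hZ'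
    have hsmul : (c j • ·) ⁻¹' Z' ∈ 𝓝 (0 : X) :=
      (continuous_const_smul (c j)).tendsto' 0 0 (smul_zero _) hZ'
    refine ⟨_ ∩ W, inter_mem hsmul hW, fun w hw => ?_⟩
    rw [Finset.sum_insert hj]
    exact hadd _ (hw j (Finset.mem_insert_self j s)).1 _
      (hsum w fun i hi => (hw i (Finset.mem_insert_of_mem hi)).2)

theorem exists_isOpen_balanced_smul_add_sum_mem {V : Set X} (hV : IsOpen V) {x : X} (hx : x ∈ V)
    {a : 𝕂} (ha : a ≠ 0) (s : Finset ι) (c : ι → 𝕂) :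
    ∃ V' W : Set X, IsOpen V' ∧ V'.Nonempty ∧ IsOpen W ∧ (0 : X) ∈ W ∧ Balanced 𝕂 W ∧
      ∀ y ∈ V', ∀ w : ι → X, (∀ i ∈ s, w i ∈ W) → a • y + ∑ i ∈ s, c i • w i ∈ V := by
  have hVx : (x + ·) ⁻¹' V ∈ 𝓝 (0 : X) :=
    (continuous_const_add x).tendsto' 0 x (add_zero x) (hV.mem_nhds hx)
  obtain ⟨Z, hZ, hadd⟩ := exists_nhds_zero_half hVx
  obtain ⟨W₀, hW₀, hsum⟩ := exists_mem_nhds_zero_sum_smul_mem s c hZ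
  obtain ⟨W, hWW₀, hWopen, hW0, hWbal⟩ := exists_isOpen_balanced_subset_of_mem_nhds_zero 𝕂 hW₀
  refine ⟨(fun y => a • y - x) ⁻¹' interior Z, W,
    isOpen_interior.preimage ((continuous_const_smul a).sub continuous_const),
    ⟨a⁻¹ • x, by simpa [smul_inv_smul₀ ha] using mem_interior_iff_mem_nhds.2 hZ⟩,
    hWopen, hW0, hWbal, fun y hy w hw => ?_⟩
  have := hadd _ (interior_subset hy) _ (hsum w fun i hi => hWW₀ (hw i hi))
  simpa only [mem_preimage, add_sub_cancel, ← add_assoc] using this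

theorem dense_range_iterate_smul_add_sum (T : X →L[𝕂] X) (u : X) (v : ι → X) (s : Finset ι)
    {a : 𝕂} (ha : a ≠ 0) (c : ι → 𝕂)
    (h : ∀ V W : Set X, IsOpen V → V.Nonempty → IsOpen W → (0 : X) ∈ W → Balanced 𝕂 W →
      ∃ q : ℕ, (T ^ q) u ∈ V ∧ ∀ i ∈ s, (T ^ q) (v i) ∈ W) :
    Dense (range fun n : ℕ => (T ^ n) (a • u + ∑ i ∈ s, c i • v i)) := by
  refine dense_iff_inter_open.2 fun V hV ⟨x, hx⟩ => ?_
  obtain ⟨V', W, hV', hV'ne, hW, hW0, hWbal, happrox⟩ :=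
    exists_isOpen_balanced_smul_add_sum_mem hV hx ha s c
  obtain ⟨q, hqu, hqv⟩ := h V' W hV' hV'ne hW hW0 hWbal
  refine ⟨_, ?_, q, rfl⟩
  simp only [map_add, map_smul, map_sum]
  exact happrox _ hqu _ hqv

end ApproximationInTVS

namespace MvPolynomial

theorem aeval_eq_sum_smul_prod_pow {R A σ : Type*} [CommSemiring R] [CommSemiring A] [Algebra R A]
    [Fintype σ] (f : σ → A) (P : MvPolynomial σ R) :
    aeval f P = ∑ d ∈ P.support, P.coeff d • ∏ i, f i ^ d i := by
  rw [aeval_def, eval₂_eq']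
  exact Finset.sum_congr rfl fun d _ => (Algebra.smul_def _ _).symm

theorem zero_notMem_support_of_constantCoeff_eq_zero {R σ : Type*} [CommSemiring R]
    {P : MvPolynomial σ R} (h : constantCoeff P = 0) : 0 ∉ P.support := by
  rwa [mem_support_iff, not_not, ← constantCoeff_eq]

end MvPolynomial

theorem stmt_17_general (𝕂 X : Type*) [RCLike 𝕂] [CommRing X] [Algebra 𝕂 X]
    [TopologicalSpace X] [IsTopologicalRing X] [ContinuousSMul 𝕂 X]
    (T : X →L[𝕂] X) (N : ℕ) (f : Fin N → X)
    (hf : ∀ A : Finset (Fin N → ℕ), A.Nonempty → (0 : Fin N → ℕ) ∉ A →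
      ∃ β ∈ A, ∀ V W : Set X, IsOpen V → V.Nonempty →
        IsOpen W → (0 : X) ∈ W → Balanced 𝕂 W →
        ∃ q : ℕ, (T ^ q) (∏ i, f i ^ β i) ∈ V ∧
          ∀ α ∈ A, α ≠ β → (T ^ q) (∏ i, f i ^ α i) ∈ W) :
    ∀ P : MvPolynomial (Fin N) 𝕂, P ≠ 0 → MvPolynomial.constantCoeff P = 0 →
      Dense (Set.range fun n : ℕ => (T ^ n) (MvPolynomial.aeval f P)) := by
  classical
  intro P hP h0
  set A := P.support.image fun d : Fin N →₀ ℕ => ⇑d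
  have hA0 : (0 : Fin N → ℕ) ∉ A := by
    intro h0A
    obtain ⟨d, hd, hd0⟩ := Finset.mem_image.1 h0A
    obtain rfl : d = 0 := DFunLike.coe_injective hd0
    exact MvPolynomial.zero_notMem_support_of_constantCoeff_eq_zero h0 hd
  obtain ⟨β, hβA, hβ⟩ := hf A ((MvPolynomial.support_nonempty.2 hP).image _) hA0
  obtain ⟨b, hb, rfl⟩ := Finset.mem_image.1 hβA
  rw [MvPolynomial.aeval_eq_sum_smul_prod_pow, ← Finset.add_sum_erase _ _ hb]
  refine dense_range_iterate_smul_add_sum T _ (fun d : Fin N →₀ ℕ => ∏ i, f i ^ d i) _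
    (MvPolynomial.mem_support_iff.1 hb) P.coeff fun V W hV hVne hW hW0 hWbal => ?_
  obtain ⟨q, hqb, hqA⟩ := hβ V W hV hVne hW hW0 hWbal
  exact ⟨q, hqb, fun d hd => hqA _ (Finset.mem_image_of_mem _ (Finset.mem_of_mem_erase hd))
    (DFunLike.coe_injective.ne (Finset.ne_of_mem_erase hd))⟩

/-- Tuples satisfying the approximation condition (for every finite set `A` of
multi-indices avoiding `0` there is a distinguished `β ∈ A` such that for all open `V`
and all balanced open neighborhoods `W` of `0` some iterate sends `f^β` into `V` and all
other powers `f^α`, `α ∈ A`, into `W`) generate a hypercyclic algebra. -/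
theorem stmt_17 (𝕂 X : Type*) [RCLike 𝕂] [CommRing X] [Algebra 𝕂 X]
    [TopologicalSpace X] [IsTopologicalRing X] [ContinuousSMul 𝕂 X] [PolishSpace X]
    (T : X →L[𝕂] X) (N : ℕ) (hN : 2 ≤ N) (f : Fin N → X)
    (hf : ∀ A : Finset (Fin N → ℕ), A.Nonempty → (0 : Fin N → ℕ) ∉ A →
      ∃ β ∈ A, ∀ V W : Set X, IsOpen V → V.Nonempty →
        IsOpen W → (0 : X) ∈ W → Balanced 𝕂 W →
        ∃ q : ℕ, (T ^ q) (∏ i, f i ^ β i) ∈ V ∧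
          ∀ α ∈ A, α ≠ β → (T ^ q) (∏ i, f i ^ α i) ∈ W) :
    ∀ P : MvPolynomial (Fin N) 𝕂, P ≠ 0 → MvPolynomial.constantCoeff P = 0 →
      Dense (Set.range fun n : ℕ => (T ^ n) (MvPolynomial.aeval f P)) :=
  stmt_17_general 𝕂 X T N f hf
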